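/- For p ∈ [1/2,1), q = 1-p, and d ≥ 1: E[R_{N_d}/N_d] = 1/2 + (d/2) ∫₀¹ u^{d-1} h_p(u) du, where h_p(u) = (p - q u²)/(p + q u²). -/

import Mathlib

open MeasureTheory ProbabilityTheory Real

/-- Partial sums of the walk: `S n = X 0 + ⋯ + X (n-1)`. -/
def walkSum {Ω : Type*} (X : ℕ → Ω → ℤ) (n : ℕ) (ω : Ω) : ℤ :=
  ∑ k ∈ Finset.range n, X k ω

/-- First hitting time of level `d` (junk value `0` if the level is never hit). -/
noncomputable def hitTime {Ω : Type*} (X : ℕ → Ω → ℤ) (d : ℤ) (ω : Ω) : ℕ :=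
  sInf {n : ℕ | walkSum X n ω = d}

/-- Number of `+1` steps ("wins") among the first `n` steps. -/
def wins {Ω : Type*} (X : ℕ → Ω → ℤ) (n : ℕ) (ω : Ω) : ℕ :=
  ((Finset.range n).filter (fun k => X k ω = 1)).card

set_option linter.unusedSectionVars false
set_option linter.unusedVariables false
set_option maxHeartbeats 1000000
section AuxRW
variable {Ω : Type*} [MeasurableSpace Ω] {X : ℕ → Ω → ℤ}

lemma meas_walkSum (hmeas : ∀ n, Measurable (X n)) (n : ℕ) :
    Measurable (fun ω => walkSum X n ω) :=
  Finset.measurable_sum _ (fun i _ => hmeas i)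

lemma meas_hitTime (hmeas : ∀ n, Measurable (X n)) (d : ℤ) :
    Measurable (hitTime X d) := by
  apply measurable_to_countable'
  intro n
  have : hitTime X d ⁻¹' {n} =
      ({ω | walkSum X n ω = d} ∩ ⋂ m ∈ Finset.range n, {ω | walkSum X m ω ≠ d}) ∪
      (if n = 0 then ⋂ m : ℕ, {ω | walkSum X m ω ≠ d} else ∅) := by
    ext ω
    simp only [Set.mem_preimage, Set.mem_singleton_iff, Set.mem_union, Set.mem_inter_iff,
      Set.mem_iInter, Set.mem_setOf_eq, Finset.mem_range]
    constructor
    · intro h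
      by_cases hne : {m : ℕ | walkSum X m ω = d}.Nonempty
      · left
        have h1 : walkSum X n ω = d := h ▸ Nat.sInf_mem hne
        exact ⟨h1, fun m hm => Nat.notMem_of_lt_sInf (h ▸ hm)⟩
      · right
        rw [Set.not_nonempty_iff_eq_empty] at hne
        have h0 : hitTime X d ω = 0 := by simp [hitTime, hne]
        have h0' : n = 0 := by rw [← h]; simp [hitTime, hne]
        subst h0'
        rw [if_pos rfl]
        exact Set.mem_iInter.mpr (fun m => Set.eq_empty_iff_forall_notMem.mp hne m)
    · rintro (⟨h1, h2⟩ | h3)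
      · have hne : {m : ℕ | walkSum X m ω = d}.Nonempty := ⟨n, h1⟩
        have hmem : walkSum X (hitTime X d ω) ω = d := Nat.sInf_mem hne
        exact le_antisymm (Nat.sInf_le h1) (le_of_not_gt (fun hc => h2 _ hc hmem))
      · by_cases hn : n = 0
        · subst hn
          simp only [if_true] at h3
          have he : {m : ℕ | walkSum X m ω = d} = ∅ :=
            Set.eq_empty_iff_forall_notMem.mpr (fun m => Set.mem_iInter.mp h3 m)
          simp [hitTime, he]
        · simp [hn] at h3
  rw [this]
  have hws : ∀ m, MeasurableSet {ω | walkSum X m ω = d} := fun m =>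
    (meas_walkSum hmeas m) (measurableSet_singleton d)
  refine MeasurableSet.union (MeasurableSet.inter (hws n) ?_) ?_
  · exact MeasurableSet.biInter (Set.to_countable _) (fun m _ => (hws m).compl)
  · split_ifs
    · exact MeasurableSet.iInter (fun m => (hws m).compl)
    · exact MeasurableSet.empty

lemma meas_comp_nat {f : Ω → ℕ} (hf : Measurable f) {g : ℕ → Ω → ℝ}
    (hg : ∀ n, Measurable (g n)) : Measurable (fun ω => g (f ω) ω) := by
  have h1 : Measurable (fun ω => (ω, f ω)) := measurable_id.prodMk hf
  have h2 : Measurable (fun p : Ω × ℕ => g p.2 p.1) :=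
    measurable_from_prod_countable_left (fun n => hg n)
  exact h2.comp h1

section paths
variable {d : ℕ} {ω : Ω}

lemma walkSum_succ (n : ℕ) (ω : Ω) :
    walkSum X (n+1) ω = walkSum X n ω + X n ω := Finset.sum_range_succ _ _

/-- On an ω where the level is hit, basic facts about the hitting time. -/
lemma hit_facts (hd : 1 ≤ d) (hsteps : ∀ k, X k ω = 1 ∨ X k ω = -1)
    (hne : ∃ n, walkSum X n ω = (d:ℤ)) :
    walkSum X (hitTime X d ω) ω = d ∧ 1 ≤ hitTime X d ω ∧
      (∀ m < hitTime X d ω, walkSum X m ω ≠ d) ∧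
      (∀ k ≤ hitTime X d ω, walkSum X k ω ≤ d) := by
  set N := hitTime X d ω with hN
  have hne' : {n : ℕ | walkSum X n ω = (d:ℤ)}.Nonempty := hne
  have hmem : walkSum X N ω = d := Nat.sInf_mem hne'
  have hlt : ∀ m < N, walkSum X m ω ≠ d := fun m hm => Nat.notMem_of_lt_sInf hm
  have h0 : walkSum X 0 ω = 0 := by simp [walkSum]
  have hpos : 1 ≤ N := by
    rcases Nat.eq_zero_or_pos N with h | h
    · exfalso
      rw [h] at hmem
      rw [h0] at hmem
      omega
    · exact h
  refine ⟨hmem, hpos, hlt, ?_⟩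
  intro k hk
  induction k with
  | zero => rw [h0]; exact_mod_cast Nat.zero_le d
  | succ m ih =>
    have hm : m < N := Nat.lt_of_succ_le hk
    have hmd : walkSum X m ω ≤ d := ih (le_of_lt hm)
    have hne2 : walkSum X m ω ≠ d := hlt m hm
    have hstep : X m ω ≤ 1 := by rcases hsteps m with h | h <;> simp [h]
    rw [walkSum_succ]
    omega

/-- The wins identity: `2 * wins = N + d` at the hitting time. -/
lemma wins_eq (hsteps : ∀ k, X k ω = 1 ∨ X k ω = -1) {n : ℕ}
    (hsum : walkSum X n ω = (d:ℤ)) :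
    2 * (wins X n ω : ℤ) = n + d := by
  classical
  have h1 : walkSum X n ω =
      ∑ k ∈ Finset.range n, (if X k ω = 1 then (1:ℤ) else -1) := by
    refine Finset.sum_congr rfl (fun k _ => ?_)
    rcases hsteps k with h | h <;> simp [h]
  rw [Finset.sum_ite, Finset.sum_const, Finset.sum_const] at h1
  have hcard : ((Finset.range n).filter (fun k => ¬ X k ω = 1)).card
      = n - ((Finset.range n).filter (fun k => X k ω = 1)).card := by
    rw [Finset.filter_not, Finset.card_sdiff_of_subset (Finset.filter_subset _ _), Finset.card_range]
  have hle : ((Finset.range n).filter (fun k => X k ω = 1)).card ≤ n := by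
    calc ((Finset.range n).filter (fun k => X k ω = 1)).card
        ≤ (Finset.range n).card := Finset.card_filter_le _ _
      _ = n := Finset.card_range n
  rw [hcard] at h1
  simp only [nsmul_eq_mul, mul_one, mul_neg_one] at h1
  rw [hsum] at h1
  unfold wins
  push_cast [hle] at h1 ⊢
  omega
end paths

lemma steps_ae (P : Measure Ω) [IsProbabilityMeasure P] {p : ℝ}
    (hp : p ∈ Set.Ico (1/2 : ℝ) 1) (hmeas : ∀ n, Measurable (X n))
    (hup : ∀ n, P {ω | X n ω = 1} = ENNReal.ofReal p)
    (hdown : ∀ n, P {ω | X n ω = -1} = ENNReal.ofReal (1 - p)) :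
    ∀ᵐ ω ∂P, ∀ k, X k ω = 1 ∨ X k ω = -1 := by
  rw [ae_all_iff]
  intro k
  have hmA : MeasurableSet {ω | X k ω = 1} := (hmeas k) (measurableSet_singleton 1)
  have hmB : MeasurableSet {ω | X k ω = -1} := (hmeas k) (measurableSet_singleton (-1))
  have hdisj : Disjoint {ω | X k ω = 1} {ω | X k ω = -1} := by
    rw [Set.disjoint_left]
    intro ω h1 h2
    simp only [Set.mem_setOf_eq] at h1 h2
    rw [h1] at h2; exact absurd h2 (by norm_num)
  have hunion : P ({ω | X k ω = 1} ∪ {ω | X k ω = -1}) = 1 := by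
    rw [measure_union hdisj hmB, hup, hdown, ← ENNReal.ofReal_add (by linarith [hp.1]) (by linarith [hp.2])]
    norm_num
  have hc : P ({ω | X k ω = 1} ∪ {ω | X k ω = -1})ᶜ = 0 := by
    rw [measure_compl (hmA.union hmB) (measure_ne_top _ _), hunion, measure_univ]
    simp
  refine measure_mono_null ?_ hc
  intro ω hω
  simp only [Set.mem_compl_iff, Set.mem_union, Set.mem_setOf_eq]
  simpa using hω

noncomputable def psiF (p v : ℝ) : ℝ := v / (p + (1-p) * v^2)
noncomputable def dpsiF (p v : ℝ) : ℝ := (p - (1-p) * v^2) / (p + (1-p) * v^2)^2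

section psi
variable {p : ℝ} (hp : p ∈ Set.Ico (1/2 : ℝ) 1)
include hp

lemma den_pos (v : ℝ) : 0 < p + (1-p) * v^2 := by
  have h1 : (0:ℝ) < p := by linarith [hp.1]
  have h2 : p ≤ 1 := le_of_lt hp.2
  nlinarith [sq_nonneg v]

lemma psiF_pos {v : ℝ} (hv : 0 < v) : 0 < psiF p v :=
  div_pos hv (den_pos hp v)

lemma psiF_le_one {v : ℝ} (hv0 : 0 ≤ v) (hv1 : v ≤ 1) : psiF p v ≤ 1 := by
  rw [psiF, div_le_one (den_pos hp v)]
  have h1 : 0 ≤ (1-v) * (p - (1-p)*v) := by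
    apply mul_nonneg (by linarith)
    nlinarith [hp.1, hp.2]
  nlinarith

@[simp] lemma psiF_zero : psiF p 0 = 0 := by simp [psiF]

lemma psiF_one : psiF p 1 = 1 := by
  rw [psiF]; rw [div_eq_one_iff_eq (by nlinarith [den_pos hp 1])]; ring

lemma psiF_inv {v : ℝ} (hv : 0 < v) : p * v⁻¹ + (1-p) * v = (psiF p v)⁻¹ := by
  rw [psiF]
  rw [inv_div]
  field_simp

lemma hasDerivAt_psiF (v : ℝ) : HasDerivAt (psiF p) (dpsiF p v) v := by
  have hden : p + (1-p) * v^2 ≠ 0 := ne_of_gt (den_pos hp v)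
  have h1 : HasDerivAt (fun v : ℝ => p + (1-p) * v^2) ((1-p) * (2*v)) v := by
    simpa using ((hasDerivAt_pow 2 v).const_mul (1-p)).const_add p
  have h2 := (hasDerivAt_id v).div h1 hden
  convert h2 using 1
  · rfl
  · rfl
  · rfl
  rw [dpsiF, id_eq]
  field_simp
  ring

lemma dpsiF_nonneg {v : ℝ} (hv0 : 0 ≤ v) (hv1 : v ≤ 1) : 0 ≤ dpsiF p v := by
  apply div_nonneg _ (sq_nonneg _)
  nlinarith [hp.1, hp.2]

lemma dpsiF_le_two {v : ℝ} (hv0 : 0 ≤ v) (hv1 : v ≤ 1) : dpsiF p v ≤ 2 := by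
  rw [dpsiF, div_le_iff₀ (pow_pos (den_pos hp v) 2)]
  have h1 : (1/2:ℝ) ≤ p := hp.1
  have h2 : p ≤ p + (1-p) * v^2 := by nlinarith [hp.2]
  have h3 : p^2 ≤ (p + (1-p) * v^2)^2 := by nlinarith
  nlinarith [hp.2]

lemma continuous_dpsiF : Continuous (dpsiF p) := by
  apply Continuous.div (by continuity) (by continuity)
  intro v
  exact ne_of_gt (pow_pos (den_pos hp v) 2)
end psi

lemma integrable_bdd {f : Ω → ℝ} (P : Measure Ω) [IsFiniteMeasure P] {C : ℝ}
    (hm : AEStronglyMeasurable f P) (hb : ∀ᵐ ω ∂P, ‖f ω‖ ≤ C) : Integrable f P :=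
  Integrable.mono' (integrable_const C) hm hb

lemma int_vX (P : Measure Ω) [IsProbabilityMeasure P] {p : ℝ}
    (hp : p ∈ Set.Ico (1/2:ℝ) 1) (hmeas : ∀ n, Measurable (X n))
    (hup : ∀ n, P {ω | X n ω = 1} = ENNReal.ofReal p)
    (hdown : ∀ n, P {ω | X n ω = -1} = ENNReal.ofReal (1 - p))
    (n : ℕ) {v : ℝ} (hv : 0 < v) :
    ∫ ω, (v:ℝ) ^ (-(X n ω)) ∂P = p * v⁻¹ + (1-p) * v := by
  have hmA : MeasurableSet {ω | X n ω = 1} := (hmeas n) (measurableSet_singleton 1)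
  have hmB : MeasurableSet {ω | X n ω = -1} := (hmeas n) (measurableSet_singleton (-1))
  have hae : ∀ᵐ ω ∂P, X n ω = 1 ∨ X n ω = -1 := by
    filter_upwards [steps_ae P hp hmeas hup hdown] with ω h using h n
  have hcong : ∀ᵐ ω ∂P, (v:ℝ) ^ (-(X n ω)) =
      Set.indicator {ω | X n ω = 1} (fun _ => v⁻¹) ω
        + Set.indicator {ω | X n ω = -1} (fun _ => v) ω := by
    filter_upwards [hae] with ω h
    rcases h with h | h
    · have h1 : ω ∈ {ω | X n ω = 1} := h
      have h2 : ω ∉ {ω | X n ω = -1} := by simp only [Set.mem_setOf_eq, h]; decide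
      rw [Set.indicator_of_mem h1, Set.indicator_of_notMem h2, h]
      simp [zpow_neg]
    · have h1 : ω ∉ {ω | X n ω = 1} := by simp only [Set.mem_setOf_eq, h]; decide
      have h2 : ω ∈ {ω | X n ω = -1} := h
      rw [Set.indicator_of_notMem h1, Set.indicator_of_mem h2, h]
      simp
  rw [integral_congr_ae hcong,
    integral_add ((integrable_const v⁻¹).indicator hmA) ((integrable_const v).indicator hmB),
    integral_indicator_const _ hmA, integral_indicator_const _ hmB, measureReal_def, measureReal_def, hup n, hdown n,
    ENNReal.toReal_ofReal (by linarith [hp.1]), ENNReal.toReal_ofReal (by linarith [hp.2])]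
  simp [smul_eq_mul]

lemma key (P : Measure Ω) [IsProbabilityMeasure P] {p : ℝ}
    (hp : p ∈ Set.Ico (1/2:ℝ) 1) (hmeas : ∀ n, Measurable (X n))
    (hindep : iIndepFun X P)
    (hup : ∀ n, P {ω | X n ω = 1} = ENNReal.ofReal p)
    (hdown : ∀ n, P {ω | X n ω = -1} = ENNReal.ofReal (1 - p))
    {d : ℕ} (hd : 1 ≤ d)
    (hfin : ∀ᵐ ω ∂P, ∃ n, walkSum X n ω = (d:ℤ))
    {v : ℝ} (hv : v ∈ Set.Ioo (0:ℝ) 1) :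
    ∫ ω, (psiF p v) ^ (hitTime X (d:ℤ) ω) ∂P = v ^ d := by
  classical
  obtain ⟨hv0, hv1⟩ := hv
  have hvne : v ≠ 0 := ne_of_gt hv0
  set u := psiF p v with hu
  have hu0 : 0 < u := psiF_pos hp hv0
  have hu1 : u ≤ 1 := psiF_le_one hp (le_of_lt hv0) (le_of_lt hv1)
  set N := hitTime X (d:ℤ) with hNdef
  set F : ℕ → Ω → ℝ :=
    fun n ω => u ^ (min (N ω) n) * v ^ (-(walkSum X (min (N ω) n) ω)) with hF
  have haegood : ∀ᵐ ω ∂P,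
      (∀ k, X k ω = 1 ∨ X k ω = -1) ∧ ∃ n, walkSum X n ω = (d:ℤ) :=
    (steps_ae P hp hmeas hup hdown).and hfin
  -- measurability of F n
  have hmF : ∀ n, Measurable (F n) := by
    intro n
    apply meas_comp_nat (f := fun ω => min (N ω) n)
      (g := fun m ω => u ^ m * v ^ (-(walkSum X m ω)))
    · exact (measurable_from_top (f := fun m => min m n)).comp (meas_hitTime hmeas _)
    · intro m
      exact measurable_const.mul
        ((measurable_from_top (f := fun z : ℤ => v ^ (-z))).comp (meas_walkSum hmeas m))
  -- uniform a.e. bound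
  have hbF : ∀ m, ∀ᵐ ω ∂P, ‖F m ω‖ ≤ v ^ (-(d:ℤ)) := by
    intro m
    filter_upwards [haegood] with ω hg
    obtain ⟨hmem, hpos, hlt, hle⟩ := hit_facts hd hg.1 hg.2
    have h5 : walkSum X (min (N ω) m) ω ≤ d := hle _ (min_le_left _ _)
    have hpow : (0:ℝ) < v ^ (-(walkSum X (min (N ω) m) ω)) := zpow_pos hv0 _
    rw [Real.norm_of_nonneg (by positivity)]
    calc u ^ (min (N ω) m) * v ^ (-(walkSum X (min (N ω) m) ω))
        ≤ v ^ (-(walkSum X (min (N ω) m) ω)) :=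
          mul_le_of_le_one_left (le_of_lt hpow) (pow_le_one₀ (le_of_lt hu0) hu1)
      _ ≤ v ^ (-(d:ℤ)) :=
          zpow_le_zpow_right_of_le_one₀ hv0 (le_of_lt hv1) (neg_le_neg h5)
  have hintF : ∀ m, Integrable (F m) P :=
    fun m => integrable_bdd P (hmF m).aestronglyMeasurable (hbF m)
  -- the induction step
  have hstep : ∀ n, ∫ ω, F (n+1) ω ∂P = ∫ ω, F n ω ∂P := by
    intro n
    set C : Set Ω := {ω | ∀ k ≤ n, walkSum X k ω ≠ (d:ℤ)} with hC
    have hmC : MeasurableSet C := by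
      have hCeq : C = ⋂ k ∈ Finset.range (n+1), {ω | walkSum X k ω ≠ (d:ℤ)} := by
        ext ω
        simp [hC, Nat.lt_succ_iff]
      rw [hCeq]
      exact MeasurableSet.biInter (Set.to_countable _)
        (fun k _ => ((meas_walkSum hmeas k) (measurableSet_singleton _)).compl)
    set Y : Ω → ℝ := C.indicator (fun ω => u ^ n * v ^ (-(walkSum X n ω))) with hYdef
    set Z : Ω → ℝ := fun ω => u * v ^ (-(X n ω)) - 1 with hZdef
    -- pointwise decomposition
    have h1 : ∀ᵐ ω ∂P, F (n+1) ω = F n ω + Y ω * Z ω := by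
      filter_upwards [haegood] with ω hg
      obtain ⟨hmem, hpos, hlt, hle⟩ := hit_facts hd hg.1 hg.2
      by_cases hc : ω ∈ C
      · have hNgt : n < N ω := by
          by_contra hcon
          push_neg at hcon
          exact hc (N ω) hcon hmem
        have hm1 : min (N ω) (n+1) = n + 1 := by omega
        have hm2 : min (N ω) n = n := by omega
        simp only [hF, hm1, hm2, hYdef, hZdef, Set.indicator_of_mem hc]
        rw [walkSum_succ, neg_add, zpow_add₀ hvne, pow_succ]
        ring
      · have hex : ∃ k, k ≤ n ∧ walkSum X k ω = (d:ℤ) := by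
          simp only [hC, Set.mem_setOf_eq] at hc
          push_neg at hc
          exact hc
        obtain ⟨k, hk, hkd⟩ := hex
        have hNle : N ω ≤ n := le_trans (Nat.sInf_le hkd) hk
        have hm1 : min (N ω) (n+1) = min (N ω) n := by omega
        simp [hF, hm1, hYdef, Set.indicator_of_notMem hc]
    -- integrability of Y and Z
    have hmY : Measurable Y :=
      Measurable.indicator (measurable_const.mul
        ((measurable_from_top (f := fun z : ℤ => v ^ (-z))).comp (meas_walkSum hmeas n))) hmC
    have hbY : ∀ᵐ ω ∂P, ‖Y ω‖ ≤ v ^ (-(d:ℤ)) := by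
      filter_upwards [haegood] with ω hg
      obtain ⟨hmem, hpos, hlt, hle⟩ := hit_facts hd hg.1 hg.2
      by_cases hc : ω ∈ C
      · have hNgt : n < N ω := by
          by_contra hcon
          push_neg at hcon
          exact hc (N ω) hcon hmem
        have h5 : walkSum X n ω ≤ d := hle _ (le_of_lt hNgt)
        rw [hYdef, Set.indicator_of_mem hc,
          Real.norm_of_nonneg (by positivity)]
        calc u ^ n * v ^ (-(walkSum X n ω)) ≤ v ^ (-(walkSum X n ω)) :=
              mul_le_of_le_one_left (le_of_lt (zpow_pos hv0 _)) (pow_le_one₀ (le_of_lt hu0) hu1)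
          _ ≤ v ^ (-(d:ℤ)) :=
              zpow_le_zpow_right_of_le_one₀ hv0 (le_of_lt hv1) (neg_le_neg h5)
      · rw [hYdef, Set.indicator_of_notMem hc]
        simp only [norm_zero]
        positivity
    have hintY : Integrable Y P := integrable_bdd P hmY.aestronglyMeasurable hbY
    have hmZ : Measurable Z :=
      (measurable_const.mul
        ((measurable_from_top (f := fun z : ℤ => v ^ (-z))).comp (hmeas n))).sub measurable_const
    have hbZ : ∀ᵐ ω ∂P, ‖Z ω‖ ≤ u * v⁻¹ + u * v + 1 := by
      filter_upwards [haegood] with ω hg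
      have hkey : ∀ w : ℝ, 0 < w → ‖u * w - 1‖ ≤ u * w + 1 := by
        intro w hw
        refine le_trans (norm_sub_le _ _) ?_
        rw [norm_one, Real.norm_of_nonneg (by positivity)]
      have huv : 0 < u * v := mul_pos hu0 hv0
      have huvi : 0 < u * v⁻¹ := mul_pos hu0 (inv_pos.mpr hv0)
      rcases hg.1 n with h | h
      · rw [hZdef]
        simp only [h]
        rw [show ((-1 : ℤ)) = -(1:ℤ) from rfl, zpow_neg, zpow_one]
        calc ‖u * v⁻¹ - 1‖ ≤ u * v⁻¹ + 1 := hkey _ (inv_pos.mpr hv0)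
          _ ≤ u * v⁻¹ + u * v + 1 := by linarith
      · rw [hZdef]
        simp only [h, neg_neg, zpow_one]
        calc ‖u * v - 1‖ ≤ u * v + 1 := hkey _ hv0
          _ ≤ u * v⁻¹ + u * v + 1 := by linarith
    have hintZ : Integrable Z P := integrable_bdd P hmZ.aestronglyMeasurable hbZ
    -- independence of Y and Z
    have hindYZ : IndepFun Y Z P := by
      set S : Finset ℕ := Finset.range n with hS
      set T : Finset ℕ := {n} with hT
      have hST : Disjoint S T := by
        simp [hS, hT, Finset.disjoint_singleton_right]
      have base := hindep.indepFun_finset S T hST hmeas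
      set ext : ((i : S) → ℤ) → ℕ → ℤ := fun g i => if h : i ∈ S then g ⟨i, h⟩ else 0 with hext
      set psum : ((i : S) → ℤ) → ℕ → ℤ := fun g k => ∑ i ∈ Finset.range k, ext g i with hpsum
      have hpsum_meas : ∀ k, Measurable (fun g => psum g k) := by
        intro k
        apply Finset.measurable_sum
        intro i _
        by_cases h : i ∈ S
        · simp only [hext, dif_pos h]
          exact measurable_pi_apply _
        · simp only [hext, dif_neg h]
          exact measurable_const
      set φ : ((i : S) → ℤ) → ℝ :=
        fun g => Set.indicator {g | ∀ k ≤ n, psum g k ≠ (d:ℤ)}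
          (fun g => u ^ n * v ^ (-(psum g n))) g with hφdef
      set ψ : ((i : T) → ℤ) → ℝ :=
        fun g => u * v ^ (-(g ⟨n, Finset.mem_singleton_self n⟩)) - 1 with hψdef
      have hφ : Measurable φ := by
        apply Measurable.indicator
        · exact measurable_const.mul
            ((measurable_from_top (f := fun z : ℤ => v ^ (-z))).comp (hpsum_meas n))
        · have : {g : (i : S) → ℤ | ∀ k ≤ n, psum g k ≠ (d:ℤ)}
              = ⋂ k ∈ Finset.range (n+1), {g | psum g k ≠ (d:ℤ)} := by
            ext g
            simp [Nat.lt_succ_iff]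
          rw [this]
          exact MeasurableSet.biInter (Set.to_countable _)
            (fun k _ => ((hpsum_meas k) (measurableSet_singleton _)).compl)
      have hψ : Measurable ψ := by
        exact (measurable_const.mul
          ((measurable_from_top (f := fun z : ℤ => v ^ (-z))).comp
            (measurable_pi_apply _))).sub measurable_const
      have hcomp := base.comp hφ hψ
      have hYeq : Y = φ ∘ (fun a (i : S) => X i a) := by
        funext ω
        have hps : ∀ k ≤ n, psum (fun i : S => X i ω) k = walkSum X k ω := by
          intro k hk
          refine Finset.sum_congr rfl (fun i hi => ?_)
          have hiS : i ∈ S := Finset.mem_range.mpr (lt_of_lt_of_le (Finset.mem_range.mp hi) hk)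
          simp [hext, hiS]
        simp only [Function.comp_apply, hφdef, hYdef]
        by_cases hc : ω ∈ C
        · rw [Set.indicator_of_mem hc, Set.indicator_of_mem]
          · rw [hps n le_rfl]
          · intro k hk
            rw [hps k hk]
            exact hc k hk
        · rw [Set.indicator_of_notMem hc, Set.indicator_of_notMem]
          intro hcon
          exact hc (fun k hk => (hps k hk) ▸ hcon k hk)
      have hZeq : Z = ψ ∘ (fun a (i : T) => X i a) := by
        funext ω
        simp [hψdef, hZdef]
      rw [hYeq, hZeq]
      exact hcomp
    -- E[Z] = 0
    have hZ0 : ∫ ω, Z ω ∂P = 0 := by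
      have hint1 : Integrable (fun ω => u * v ^ (-(X n ω))) P := by
        apply integrable_bdd P (C := u * v⁻¹ + u * v)
        · exact (measurable_const.mul
            ((measurable_from_top (f := fun z : ℤ => v ^ (-z))).comp (hmeas n))).aestronglyMeasurable
        · filter_upwards [haegood] with ω hg
          rcases hg.1 n with h | h
          · rw [Real.norm_of_nonneg (by positivity), h,
              show ((-1 : ℤ)) = -(1:ℤ) from rfl, zpow_neg, zpow_one]
            nlinarith [mul_pos hu0 hv0]
          · rw [Real.norm_of_nonneg (by positivity), h]
            simp only [neg_neg, zpow_one]
            nlinarith [mul_pos hu0 (inv_pos.mpr hv0)]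
      rw [hZdef]
      rw [integral_sub hint1 (integrable_const 1)]
      rw [integral_const_mul, int_vX P hp hmeas hup hdown n hv0, psiF_inv hp hv0]
      simp [mul_inv_cancel₀ (ne_of_gt hu0), hu, mul_inv_cancel₀ (ne_of_gt (psiF_pos hp hv0))]
    -- putting it together
    have hintYZ : Integrable (Y * Z) P := by
      apply integrable_bdd P ((hmY.mul hmZ).aestronglyMeasurable)
        (C := v ^ (-(d:ℤ)) * (u * v⁻¹ + u * v + 1))
      filter_upwards [hbY, hbZ] with ω h1 h2
      calc ‖(Y * Z) ω‖ = ‖Y ω‖ * ‖Z ω‖ := norm_mul _ _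
        _ ≤ v ^ (-(d:ℤ)) * (u * v⁻¹ + u * v + 1) :=
            mul_le_mul h1 h2 (norm_nonneg _) (by positivity)
    calc ∫ ω, F (n+1) ω ∂P = ∫ ω, (F n ω + Y ω * Z ω) ∂P := integral_congr_ae h1
      _ = ∫ ω, F n ω ∂P + ∫ ω, Y ω * Z ω ∂P := integral_add (hintF n) hintYZ
      _ = ∫ ω, F n ω ∂P := by
          have : ∫ ω, Y ω * Z ω ∂P = (∫ ω, Y ω ∂P) * ∫ ω, Z ω ∂P := by
            have := hindYZ.integral_mul_eq_mul_integral hintY.aestronglyMeasurable hintZ.aestronglyMeasurable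
            simpa [Pi.mul_apply] using this
          rw [this, hZ0, mul_zero, add_zero]
  -- all stopped expectations are 1
  have hall : ∀ n, ∫ ω, F n ω ∂P = 1 := by
    intro n
    induction n with
    | zero =>
      have : ∀ ω, F 0 ω = 1 := by
        intro ω
        simp [hF, walkSum]
      rw [show (fun ω => F 0 ω) = fun _ => (1:ℝ) from funext this]
      simp
    | succ m ih => rw [hstep m, ih]
  -- limit via dominated convergence
  have hlim : ∀ᵐ ω ∂P,
      Filter.Tendsto (fun n => F n ω) Filter.atTop (nhds (v ^ (-(d:ℤ)) * u ^ (N ω))) := by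
    filter_upwards [haegood] with ω hg
    obtain ⟨hmem, hpos, hlt, hle⟩ := hit_facts hd hg.1 hg.2
    apply Filter.Tendsto.congr' (f₁ := fun _ => v ^ (-(d:ℤ)) * u ^ (N ω))
    · filter_upwards [Filter.eventually_ge_atTop (N ω)] with n hn
      have hmin : min (N ω) n = N ω := min_eq_left hn
      simp only [hF, hmin, hmem]
      rw [show N ω = hitTime X (d:ℤ) ω from rfl, hmem]
      ring
    · exact tendsto_const_nhds
  have hDCT := MeasureTheory.tendsto_integral_of_dominated_convergence
    (F := F) (f := fun ω => v ^ (-(d:ℤ)) * u ^ (N ω)) (fun _ => v ^ (-(d:ℤ)))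
    (fun n => (hmF n).aestronglyMeasurable) (integrable_const _) hbF hlim
  have h2' : Filter.Tendsto (fun n => ∫ ω, F n ω ∂P) Filter.atTop (nhds 1) := by
    rw [show (fun n => ∫ ω, F n ω ∂P) = fun _ => (1:ℝ) from funext hall]
    exact tendsto_const_nhds
  have hone : ∫ ω, v ^ (-(d:ℤ)) * u ^ (N ω) ∂P = 1 := (tendsto_nhds_unique h2' hDCT).symm
  rw [integral_const_mul] at hone
  have hvd : (v:ℝ) ^ (-(d:ℤ)) = (v ^ d)⁻¹ := by
    rw [zpow_neg, zpow_natCast]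
  rw [hvd] at hone
  have hvdne : (v:ℝ) ^ d ≠ 0 := pow_ne_zero _ hvne
  field_simp at hone
  exact hone

lemma continuous_psiF {p : ℝ} (hp : p ∈ Set.Ico (1/2 : ℝ) 1) : Continuous (psiF p) := by
  apply Continuous.div continuous_id (by continuity)
  intro v
  exact ne_of_gt (den_pos hp v)

lemma ftc_sub {p : ℝ} (hp : p ∈ Set.Ico (1/2 : ℝ) 1) {n : ℕ} (hn : 1 ≤ n) :
    ∫ v in (0:ℝ)..1, dpsiF p v * psiF p v ^ (n-1) = 1 / (n:ℝ) := by
  have h := intervalIntegral.integral_comp_smul_deriv (a := (0:ℝ)) (b := (1:ℝ))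
    (f := psiF p) (f' := dpsiF p)
    (g := fun u => u ^ (n-1)) (fun x _ => hasDerivAt_psiF hp x)
    ((continuous_dpsiF hp).continuousOn) (continuous_pow (n-1))
  rw [psiF_zero hp, psiF_one hp] at h
  simp only [smul_eq_mul, Function.comp] at h
  rw [h, integral_pow, Nat.sub_add_cancel hn, zero_pow (by omega : n ≠ 0)]
  have hn' : (n:ℝ) ≠ 0 := Nat.cast_ne_zero.mpr (by omega)
  field_simp
  rw [Nat.cast_sub hn]
  simp

end AuxRW

/-- `E[R_{N_d}/N_d] = 1/2 + (d/2) ∫₀¹ u^(d-1) h_p(u) du` with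
`h_p(u) = (p - qu²)/(p + qu²)`. -/
theorem stmt_6 {Ω : Type*} [MeasurableSpace Ω] (P : Measure Ω) [IsProbabilityMeasure P]
    (p : ℝ) (hp : p ∈ Set.Ico (1/2 : ℝ) 1)
    (X : ℕ → Ω → ℤ) (hmeas : ∀ n, Measurable (X n))
    (hindep : iIndepFun X P)
    (hup : ∀ n, P {ω | X n ω = 1} = ENNReal.ofReal p)
    (hdown : ∀ n, P {ω | X n ω = -1} = ENNReal.ofReal (1 - p))
    (d : ℕ) (hd : 1 ≤ d)
    (hfin : ∀ᵐ ω ∂P, ∃ n, walkSum X n ω = (d : ℤ)) :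
    ∫ ω, (wins X (hitTime X (d : ℤ) ω) ω : ℝ) / (hitTime X (d : ℤ) ω) ∂P
      = 1/2 + (d : ℝ)/2 *
          ∫ u in (0:ℝ)..1, u ^ (d - 1) * ((p - (1 - p) * u ^ 2) / (p + (1 - p) * u ^ 2)) := by
  classical
  set N := hitTime X (d:ℤ) with hNdef
  have hNmeas : Measurable N := meas_hitTime hmeas (d:ℤ)
  have haegood : ∀ᵐ ω ∂P,
      (∀ k, X k ω = 1 ∨ X k ω = -1) ∧ ∃ n, walkSum X n ω = (d:ℤ) :=
    (steps_ae P hp hmeas hup hdown).and hfin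
  -- Step 1: a.e. rewrite of the integrand
  have hren : ∀ᵐ ω ∂P, (wins X (N ω) ω : ℝ) / (N ω)
      = 1/2 + (d:ℝ)/2 * (1 / (N ω)) := by
    filter_upwards [haegood] with ω hg
    obtain ⟨hmem, hpos, hlt, hle⟩ := hit_facts hd hg.1 hg.2
    have hw := wins_eq hg.1 hmem
    have hN0 : N ω ≠ 0 := by
      intro hc
      rw [hNdef] at hc
      omega
    have hNne : ((N ω : ℝ)) ≠ 0 := Nat.cast_ne_zero.mpr hN0
    have hwR : 2 * (wins X (N ω) ω : ℝ) = (N ω : ℝ) + d := by exact_mod_cast hw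
    have hwv : (wins X (N ω) ω : ℝ) = ((N ω : ℝ) + d)/2 := by linarith
    rw [hwv]
    field_simp
  -- integrability of 1/N
  have hmInv : Measurable (fun ω => 1 / ((N ω : ℝ))) :=
    (measurable_from_top (f := fun m : ℕ => 1 / (m:ℝ))).comp hNmeas
  have hintInv : Integrable (fun ω => 1 / ((N ω : ℝ))) P := by
    apply integrable_bdd P hmInv.aestronglyMeasurable (C := 1)
    apply Filter.Eventually.of_forall
    intro ω
    rcases Nat.eq_zero_or_pos (N ω) with h | h
    · simp [h]
    · rw [Real.norm_of_nonneg (by positivity)]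
      rw [div_le_one (by exact_mod_cast h)]
      exact_mod_cast h
  -- Step 3 : E[1/N] = the integral
  have hinv : ∫ ω, 1 / ((N ω : ℝ)) ∂P
      = ∫ v in (0:ℝ)..1, v ^ (d - 1) * ((p - (1 - p) * v ^ 2) / (p + (1 - p) * v ^ 2)) := by
    set μ := (volume : Measure ℝ).restrict (Set.Ioc (0:ℝ) 1) with hμ
    set G : Ω → ℝ → ℝ := fun ω v => dpsiF p v * psiF p v ^ (N ω - 1) with hG
    -- a.e. v ∈ Ioo 0 1 under μ
    have hμIoo : ∀ᵐ v ∂μ, v ∈ Set.Ioo (0:ℝ) 1 := by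
      have h1 : ∀ᵐ v ∂μ, v ∈ Set.Ioc (0:ℝ) 1 := ae_restrict_mem measurableSet_Ioc
      have h2 : ∀ᵐ v ∂μ, v ≠ 1 := by
        rw [ae_iff]
        refine measure_mono_null (fun v hv => ?_) (?_ : μ {(1:ℝ)} = 0)
        · simpa using hv
        · refine le_antisymm (le_trans (Measure.le_iff'.1 Measure.restrict_le_self _) ?_) (zero_le)
          simp
      filter_upwards [h1, h2] with v hv hne
      exact ⟨hv.1, lt_of_le_of_ne hv.2 hne⟩
    -- integrability on the product
    have hmG : AEStronglyMeasurable (Function.uncurry G) (P.prod μ) := by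
      apply Measurable.aestronglyMeasurable
      have hm1 : Measurable (fun q : Ω × ℝ => dpsiF p q.2) :=
        (continuous_dpsiF hp).measurable.comp measurable_snd
      have hm2 : Measurable (fun q : Ω × ℝ => psiF p q.2 ^ (N q.1 - 1)) :=
        Measurable.pow ((continuous_psiF hp).measurable.comp measurable_snd)
          ((measurable_from_top (f := fun m : ℕ => m - 1)).comp (hNmeas.comp measurable_fst))
      exact hm1.mul hm2
    have hfull : ∀ᵐ q ∂(P.prod μ), q.2 ∈ Set.Ioc (0:ℝ) 1 := by
      rw [ae_iff]
      have hset : {q : Ω × ℝ | ¬ q.2 ∈ Set.Ioc (0:ℝ) 1}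
          = (Set.univ : Set Ω) ×ˢ (Set.Ioc (0:ℝ) 1)ᶜ := by
        ext q
        simp
      rw [hset, Measure.prod_prod]
      have : μ (Set.Ioc (0:ℝ) 1)ᶜ = 0 := by
        rw [hμ, Measure.restrict_apply measurableSet_Ioc.compl]
        simp
      rw [this, mul_zero]
    have hintG : Integrable (Function.uncurry G) (P.prod μ) := by
      apply integrable_bdd _ hmG (C := 2)
      filter_upwards [hfull] with q hq
      have hv0 : (0:ℝ) < q.2 := hq.1
      have hv1 : q.2 ≤ 1 := hq.2
      have h1 : 0 ≤ dpsiF p q.2 := dpsiF_nonneg hp (le_of_lt hv0) hv1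
      have h2 : dpsiF p q.2 ≤ 2 := dpsiF_le_two hp (le_of_lt hv0) hv1
      have h3 : 0 ≤ psiF p q.2 := le_of_lt (psiF_pos hp hv0)
      have h4 : psiF p q.2 ^ (N q.1 - 1) ≤ 1 := pow_le_one₀ h3 (psiF_le_one hp (le_of_lt hv0) hv1)
      have h5 : (0:ℝ) ≤ psiF p q.2 ^ (N q.1 - 1) := pow_nonneg h3 _
      rw [Function.uncurry, Real.norm_of_nonneg (mul_nonneg h1 h5)]
      nlinarith
    -- pointwise: 1/N = inner integral
    have hptw : ∀ᵐ ω ∂P, 1 / ((N ω : ℝ)) = ∫ v, G ω v ∂μ := by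
      filter_upwards [haegood] with ω hg
      obtain ⟨hmem, hpos, hlt, hle⟩ := hit_facts hd hg.1 hg.2
      have h1 : ∫ v, G ω v ∂μ = ∫ v in (0:ℝ)..1, G ω v := by
        rw [intervalIntegral.integral_of_le zero_le_one]
      rw [h1, hG]
      exact (ftc_sub hp hpos).symm
    -- inner integral over Ω for fixed v
    have hinner : ∀ᵐ v ∂μ, ∫ ω, G ω v ∂P
        = v ^ (d - 1) * ((p - (1 - p) * v ^ 2) / (p + (1 - p) * v ^ 2)) := by
      filter_upwards [hμIoo] with v hv
      obtain ⟨hv0, hv1⟩ := hv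
      have hu0 : 0 < psiF p v := psiF_pos hp hv0
      have hu1 : psiF p v ≤ 1 := psiF_le_one hp (le_of_lt hv0) (le_of_lt hv1)
      have hkey := key P hp hmeas hindep hup hdown hd hfin (v := v) ⟨hv0, hv1⟩
      have hcong : ∀ᵐ ω ∂P, psiF p v ^ (N ω - 1) = (psiF p v)⁻¹ * psiF p v ^ (N ω) := by
        filter_upwards [haegood] with ω hg
        obtain ⟨hmem, hpos, hlt, hle⟩ := hit_facts hd hg.1 hg.2
        have hps : psiF p v ^ (N ω) = psiF p v ^ (N ω - 1) * psiF p v := by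
          rw [← pow_succ, Nat.sub_add_cancel hpos]
        rw [hps]
        field_simp
      have hint2 : ∀ m : ℕ, Integrable (fun ω => psiF p v ^ (N ω - m)) P := by
        intro m
        apply integrable_bdd P (C := 1)
        · exact ((measurable_from_top (f := fun k : ℕ => psiF p v ^ (k - m))).comp
            hNmeas).aestronglyMeasurable
        · apply Filter.Eventually.of_forall
          intro ω
          rw [Real.norm_of_nonneg (pow_nonneg (le_of_lt hu0) _)]
          exact pow_le_one₀ (le_of_lt hu0) hu1
      have h2 : ∫ ω, psiF p v ^ (N ω - 1) ∂P = (psiF p v)⁻¹ * v ^ d := by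
        rw [integral_congr_ae hcong, integral_const_mul, hkey]
      have h3 : ∫ ω, G ω v ∂P = dpsiF p v * ((psiF p v)⁻¹ * v ^ d) := by
        rw [hG]
        rw [integral_const_mul, h2]
      rw [h3]
      -- algebra
      have hden : (0:ℝ) < p + (1-p) * v^2 := den_pos hp v
      have hvd : v ^ d = v ^ (d-1) * v := by rw [← pow_succ, Nat.sub_add_cancel hd]
      rw [dpsiF, psiF, hvd]
      field_simp
    -- chain everything
    calc ∫ ω, 1 / ((N ω : ℝ)) ∂P = ∫ ω, (∫ v, G ω v ∂μ) ∂P := integral_congr_ae hptw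
      _ = ∫ v, (∫ ω, G ω v ∂P) ∂μ := integral_integral_swap hintG
      _ = ∫ v, v ^ (d - 1) * ((p - (1 - p) * v ^ 2) / (p + (1 - p) * v ^ 2)) ∂μ :=
          integral_congr_ae hinner
      _ = ∫ v in (0:ℝ)..1, v ^ (d - 1) * ((p - (1 - p) * v ^ 2) / (p + (1 - p) * v ^ 2)) :=
          (intervalIntegral.integral_of_le zero_le_one).symm
  -- final assembly
  rw [integral_congr_ae hren]
  rw [integral_add (integrable_const _) (hintInv.const_mul _)]
  rw [integral_const, integral_const_mul, hinv]
  simp [measure_univ]
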